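/- Let D be a positive, 1-periodic, C² function, r a continuous 1-periodic function, q ∈ ℝ, and let (k, ψ) be a principal eigenpair of L_q^0[r;D]. Then for every positive, 1-periodic, C² function φ with ∫₀¹ φ(x)² dx = 1, one has −∫₀¹ D(x)^{1−q}·((D^{q/2}φ)'(x))² dx + ∫₀¹ r(x)φ(x)² dx ≤ k, and equality holds for the test function φ₀ := D^{q/2}ψ / (∫₀¹ D(x)^q ψ(x)² dx)^{1/2}. Hence k_q^0[r;D] equals the maximum, over positive 1-periodic C² functions φ with ∫₀¹ φ² = 1, of −∫₀¹ D^{1−q}|(D^{q/2}φ)'|² + ∫₀¹ rφ². -/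

import Mathlib

open Real MeasureTheory Set Filter Topology

noncomputable section

/-- The operator `L_q^λ[r;D]` acting on C² functions `ψ`:
`(L_q^λ[r;D]ψ)(x) = D ψ'' + ((1+q)D' − 2λD) ψ' + (qD'' + λ²D − (1+q)λD' + r) ψ`. -/
def Lop (q lam : ℝ) (r D ψ : ℝ → ℝ) (x : ℝ) : ℝ :=
  D x * deriv (deriv ψ) x + ((1 + q) * deriv D x - 2 * lam * D x) * deriv ψ x +
    (q * deriv (deriv D) x + lam ^ 2 * D x - (1 + q) * lam * deriv D x + r x) * ψ x

/-- `(k, ψ)` is a principal eigenpair of `L_q^λ[r;D]`: `ψ` is a positive, 1-periodic,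
C² function with `L_q^λ[r;D]ψ = kψ`. -/
def IsEigenpair (q lam : ℝ) (r D : ℝ → ℝ) (k : ℝ) (ψ : ℝ → ℝ) : Prop :=
  ContDiff ℝ 2 ψ ∧ (∀ x, 0 < ψ x) ∧ Function.Periodic ψ 1 ∧
    ∀ x, Lop q lam r D ψ x = k * ψ x

/-- The Freidlin–Gärtner infimum `inf_{λ>0} k(λ)/λ`, as an extended real number. -/
def speed (k : ℝ → ℝ) : EReal := ⨅ l : {l : ℝ // 0 < l}, ((k l.1 / l.1 : ℝ) : EReal)

/-!
The flux `P = D^{1-q}(D^q ψ)' = Dψ' + qD'ψ` of the eigenfunction satisfies `P' = (k - r)ψ`.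
For any 1-periodic `φ`, differentiating `P φ²/ψ` gives the Picone-type identity
`(P φ²/ψ)' = kφ² - rφ² + D^{1-q}|(D^{q/2}φ)'|² - D (φ' - (D^{q/2}ψ)'/(D^{q/2}ψ) · φ)²`,
and the left side integrates to zero over a period. Hence the functional equals
`k ∫₀¹ φ²` minus a nonnegative term, which vanishes for multiples of `D^{q/2}ψ`.
-/

theorem Function.Periodic.deriv {𝕜 F : Type*} [NontriviallyNormedField 𝕜]
    [NormedAddCommGroup F] [NormedSpace 𝕜 F] {f : 𝕜 → F} {c : 𝕜} (hf : Function.Periodic f c) :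
    Function.Periodic (deriv f) c := fun x => by
  rw [← deriv_comp_add_const, hf.funext]

theorem Function.Periodic.integral_eq_zero_of_hasDerivAt {E : Type*} [NormedAddCommGroup E]
    [NormedSpace ℝ E] [CompleteSpace E] {f f' : ℝ → E} {c : ℝ} (hf : Function.Periodic f c)
    (hderiv : ∀ x, HasDerivAt f (f' x) x) (hint : IntervalIntegrable f' volume 0 c) :
    ∫ x in (0:ℝ)..c, f' x = 0 := by
  rw [intervalIntegral.integral_eq_sub_of_hasDerivAt (fun x _ => hderiv x) hint,
    show f c = f 0 by simpa using hf 0, sub_self]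

theorem integral_div_sqrt_integral_sq_sq {g : ℝ → ℝ} {a b : ℝ} (hab : a ≤ b)
    (hg : ∫ x in a..b, g x ^ 2 ≠ 0) :
    ∫ x in a..b, (g x / √(∫ y in a..b, g y ^ 2)) ^ 2 = 1 := by
  have hnonneg : 0 ≤ ∫ y in a..b, g y ^ 2 :=
    intervalIntegral.integral_nonneg hab fun x _ => sq_nonneg (g x)
  simp_rw [div_pow, sq_sqrt hnonneg]
  rw [intervalIntegral.integral_div, div_self hg]

section

variable {q k : ℝ} {r D ψ φ : ℝ → ℝ} {x : ℝ}

theorem hasDerivAt_rpow_const_mul (s : ℝ) (hD : DifferentiableAt ℝ D x)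
    (hDx : 0 < D x) (hφ : DifferentiableAt ℝ φ x) :
    HasDerivAt (fun y => D y ^ s * φ y)
      (D x ^ s * (deriv φ x + s * (deriv D x / D x) * φ x)) x := by
  refine ((hD.hasDerivAt.rpow_const (Or.inl hDx.ne')).mul hφ.hasDerivAt).congr_deriv ?_
  rw [rpow_sub_one hDx.ne']
  field_simp
  ring

/-- `flux q D ψ = D^{1-q} (D^q ψ)'`, so that `L_q^0[r;D]ψ = (flux q D ψ)' + rψ`. -/
def flux (q : ℝ) (D ψ : ℝ → ℝ) (x : ℝ) : ℝ := D x * deriv ψ x + q * deriv D x * ψ x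

theorem hasDerivAt_flux (hD : DifferentiableAt ℝ D x)
    (hD' : DifferentiableAt ℝ (deriv D) x) (hψ : DifferentiableAt ℝ ψ x)
    (hψ' : DifferentiableAt ℝ (deriv ψ) x) :
    HasDerivAt (flux q D ψ) (Lop q 0 r D ψ x - r x * ψ x) x := by
  refine ((hD.hasDerivAt.mul hψ'.hasDerivAt).add
    ((hD'.hasDerivAt.const_mul q).mul hψ.hasDerivAt)).congr_deriv ?_
  simp only [Lop]
  ring

/-- `φ' - (log (D^{q/2} ψ))' · φ`. -/
def piconeDefect (q : ℝ) (D ψ φ : ℝ → ℝ) (x : ℝ) : ℝ :=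
  deriv φ x - (deriv ψ x / ψ x + q / 2 * (deriv D x / D x)) * φ x

theorem hasDerivAt_flux_mul_sq_div (hflux : HasDerivAt (flux q D ψ) ((k - r x) * ψ x) x)
    (hψ : DifferentiableAt ℝ ψ x) (hφ : DifferentiableAt ℝ φ x) (hψx : ψ x ≠ 0)
    (hDx : D x ≠ 0) :
    HasDerivAt (fun y => flux q D ψ y * (φ y ^ 2 / ψ y))
      (k * φ x ^ 2 - D x * piconeDefect q D ψ φ x ^ 2
        + D x * (deriv φ x + q / 2 * (deriv D x / D x) * φ x) ^ 2 - r x * φ x ^ 2) x := by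
  refine (hflux.mul ((hφ.hasDerivAt.pow 2).div hψ.hasDerivAt hψx)).congr_deriv ?_
  simp only [flux, piconeDefect, Pi.div_apply, Pi.pow_apply]
  field_simp
  ring

def rayleighFunctional (q : ℝ) (r D φ : ℝ → ℝ) : ℝ :=
  -(∫ x in (0:ℝ)..1, D x ^ (1 - q) * (deriv (fun y => D y ^ (q / 2) * φ y) x) ^ 2) +
    ∫ x in (0:ℝ)..1, r x * φ x ^ 2

theorem rpow_one_sub_mul_deriv_rpow_half_mul_sq (hD : DifferentiableAt ℝ D x) (hDx : 0 < D x)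
    (hφ : DifferentiableAt ℝ φ x) :
    D x ^ (1 - q) * deriv (fun y => D y ^ (q / 2) * φ y) x ^ 2
      = D x * (deriv φ x + q / 2 * (deriv D x / D x) * φ x) ^ 2 := by
  have hDq : D x ^ (1 - q) * (D x ^ (q / 2)) ^ 2 = D x := by
    rw [← rpow_mul_natCast hDx.le, ← rpow_add hDx]
    norm_num
  rw [(hasDerivAt_rpow_const_mul (q / 2) hD hDx hφ).deriv, mul_pow, ← mul_assoc, hDq]

theorem rayleighFunctional_eq (hD : ContDiff ℝ 2 D)
    (hDpos : ∀ x, 0 < D x) (hDper : Function.Periodic D 1) (hr : Continuous r)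
    (hψ : IsEigenpair q 0 r D k ψ) (hφ : ContDiff ℝ 1 φ) (hφper : Function.Periodic φ 1) :
    rayleighFunctional q r D φ
      = k * (∫ x in (0:ℝ)..1, φ x ^ 2)
        - ∫ x in (0:ℝ)..1, D x * piconeDefect q D ψ φ x ^ 2 := by
  obtain ⟨hψC, hψpos, hψper, heig⟩ := hψ
  have hD1 : Differentiable ℝ D := hD.differentiable two_ne_zero
  have hD'1 : Differentiable ℝ (deriv D) := (hD.deriv' (n := 1)).differentiable one_ne_zero
  have hψ1 : Differentiable ℝ ψ := hψC.differentiable two_ne_zero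
  have hψ'1 : Differentiable ℝ (deriv ψ) := (hψC.deriv' (n := 1)).differentiable one_ne_zero
  have hφ1 : Differentiable ℝ φ := hφ.differentiable one_ne_zero
  have hcD' := hD.continuous_deriv one_le_two
  have hcψ' := hψC.continuous_deriv one_le_two
  have hcφ' := hφ.continuous_deriv_one
  have hDne : ∀ x, D x ≠ 0 := fun x => (hDpos x).ne'
  have hψne : ∀ x, ψ x ≠ 0 := fun x => (hψpos x).ne'
  have hF : ∀ x, HasDerivAt (fun y => flux q D ψ y * (φ y ^ 2 / ψ y))
      (k * φ x ^ 2 - D x * piconeDefect q D ψ φ x ^ 2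
        + D x * (deriv φ x + q / 2 * (deriv D x / D x) * φ x) ^ 2 - r x * φ x ^ 2) x := by
    intro x
    refine hasDerivAt_flux_mul_sq_div ?_ (hψ1 x) (hφ1 x) (hψne x) (hDne x)
    exact (hasDerivAt_flux (hD1 x) (hD'1 x) (hψ1 x) (hψ'1 x)).congr_deriv (by rw [heig x]; ring)
  have hFper : Function.Periodic (fun y => flux q D ψ y * (φ y ^ 2 / ψ y)) 1 := fun x => by
    simp only [flux, hDper x, hDper.deriv x, hψper x, hψper.deriv x, hφper x]
  have hint : ∀ f : ℝ → ℝ, Continuous f → IntervalIntegrable f volume 0 1 :=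
    fun f hf => hf.intervalIntegrable 0 1
  have hcD := hD.continuous
  have hcψ := hψC.continuous
  have hcφ := hφ.continuous
  have hcdefect : Continuous (piconeDefect q D ψ φ) := by
    unfold piconeDefect; fun_prop (disch := assumption)
  have h0 := hFper.integral_eq_zero_of_hasDerivAt hF (hint _ (by fun_prop (disch := assumption)))
  rw [intervalIntegral.integral_sub, intervalIntegral.integral_add, intervalIntegral.integral_sub,
    intervalIntegral.integral_const_mul] at h0
  all_goals try exact hint _ (by fun_prop (disch := assumption))
  have hgrad : ∫ x in (0:ℝ)..1, D x ^ (1 - q) * deriv (fun y => D y ^ (q / 2) * φ y) x ^ 2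
      = ∫ x in (0:ℝ)..1, D x * (deriv φ x + q / 2 * (deriv D x / D x) * φ x) ^ 2 :=
    intervalIntegral.integral_congr fun x _ =>
      rpow_one_sub_mul_deriv_rpow_half_mul_sq (hD1 x) (hDpos x) (hφ1 x)
  rw [rayleighFunctional, hgrad]
  linarith

theorem rayleighFunctional_le (hD : ContDiff ℝ 2 D)
    (hDpos : ∀ x, 0 < D x) (hDper : Function.Periodic D 1) (hr : Continuous r)
    (hψ : IsEigenpair q 0 r D k ψ) (hφ : ContDiff ℝ 1 φ) (hφper : Function.Periodic φ 1)
    (hφnorm : ∫ x in (0:ℝ)..1, φ x ^ 2 = 1) :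
    rayleighFunctional q r D φ ≤ k := by
  have hdefect : 0 ≤ ∫ x in (0:ℝ)..1, D x * piconeDefect q D ψ φ x ^ 2 :=
    intervalIntegral.integral_nonneg zero_le_one fun x _ => by have := hDpos x; positivity
  rw [rayleighFunctional_eq hD hDpos hDper hr hψ hφ hφper, hφnorm]
  linarith

theorem piconeDefect_rpow_mul_div_eq_zero (c : ℝ) (hD : DifferentiableAt ℝ D x) (hDx : 0 < D x)
    (hψ : DifferentiableAt ℝ ψ x) (hψx : ψ x ≠ 0) :
    piconeDefect q D ψ (fun y => D y ^ (q / 2) * ψ y / c) x = 0 := by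
  rw [piconeDefect, ((hasDerivAt_rpow_const_mul (q / 2) hD hDx hψ).div_const c).deriv]
  field_simp
  ring

theorem rayleighFunctional_eigenfunction (hD : ContDiff ℝ 2 D)
    (hDpos : ∀ x, 0 < D x) (hDper : Function.Periodic D 1) (hr : Continuous r)
    (hψ : IsEigenpair q 0 r D k ψ) :
    rayleighFunctional q r D
      (fun x => D x ^ (q / 2) * ψ x / √(∫ y in (0:ℝ)..1, D y ^ q * ψ y ^ 2)) = k := by
  have ⟨hψC, hψpos, hψper, _⟩ := hψ
  have hDψ : ∀ x, D x ^ q * ψ x ^ 2 = (D x ^ (q / 2) * ψ x) ^ 2 := fun x => by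
    rw [mul_pow, ← rpow_mul_natCast (hDpos x).le]
    norm_num
  simp_rw [hDψ]
  set φ₀ := fun x => D x ^ (q / 2) * ψ x / √(∫ y in (0:ℝ)..1, (D y ^ (q / 2) * ψ y) ^ 2)
  have hφ₀ : ContDiff ℝ 1 φ₀ :=
    (((hD.rpow_const_of_ne fun x => (hDpos x).ne').mul hψC).div_const _).of_le one_le_two
  have hφ₀per : Function.Periodic φ₀ 1 := fun x => by simp only [φ₀, hDper x, hψper x]
  have hpos : 0 < ∫ y in (0:ℝ)..1, (D y ^ (q / 2) * ψ y) ^ 2 := by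
    refine intervalIntegral.intervalIntegral_pos_of_pos_on ?_ (fun x _ => ?_) zero_lt_one
    · exact (((hD.continuous.rpow_const fun x => Or.inl (hDpos x).ne').mul
        hψC.continuous).pow 2).intervalIntegrable _ _
    · have := hDpos x; have := hψpos x; positivity
  have hdefect : ∀ x, piconeDefect q D ψ φ₀ x = 0 := fun x =>
    piconeDefect_rpow_mul_div_eq_zero _ (hD.differentiable two_ne_zero x) (hDpos x)
      (hψC.differentiable two_ne_zero x) (hψpos x).ne'
  rw [rayleighFunctional_eq hD hDpos hDper hr hψ hφ₀ hφ₀per,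
    integral_div_sqrt_integral_sq_sq zero_le_one hpos.ne']
  simp [hdefect]

end

theorem stmt_18_general (D r : ℝ → ℝ) (hD : ContDiff ℝ 2 D) (hDpos : ∀ x, 0 < D x)
    (hDper : Function.Periodic D 1) (hr : Continuous r)
    (q k : ℝ) (ψ : ℝ → ℝ) (hψ : IsEigenpair q 0 r D k ψ) :
    (∀ φ : ℝ → ℝ, ContDiff ℝ 2 φ → (∀ x, 0 < φ x) → Function.Periodic φ 1 →
      (∫ x in (0:ℝ)..1, φ x ^ 2) = 1 →
      -(∫ x in (0:ℝ)..1, D x ^ (1 - q) * (deriv (fun y => D y ^ (q / 2) * φ y) x) ^ 2) +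
          (∫ x in (0:ℝ)..1, r x * φ x ^ 2) ≤ k) ∧
    (let φ₀ : ℝ → ℝ := (fun x =>
        D x ^ (q / 2) * ψ x / Real.sqrt (∫ y in (0:ℝ)..1, D y ^ q * ψ y ^ 2));
     -(∫ x in (0:ℝ)..1, D x ^ (1 - q) * (deriv (fun y => D y ^ (q / 2) * φ₀ y) x) ^ 2) +
          (∫ x in (0:ℝ)..1, r x * φ₀ x ^ 2) = k) :=
  ⟨fun _ hφ _ hφper hφnorm =>
    rayleighFunctional_le hD hDpos hDper hr hψ (hφ.of_le one_le_two) hφper hφnorm,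
   rayleighFunctional_eigenfunction hD hDpos hDper hr hψ⟩

/-- Lemma `variational`. Variational characterization of
`k_q^0[r;D]`: for every positive 1-periodic C² test function `φ` with `∫₀¹ φ² = 1`,
`−∫₀¹ D^{1−q}|(D^{q/2}φ)'|² + ∫₀¹ rφ² ≤ k_q^0[r;D]`, with equality for the normalized
test function `φ₀ = D^{q/2}ψ / (∫₀¹ D^q ψ²)^{1/2}` built from the principal
eigenfunction `ψ`. -/
theorem stmt_18 (D r : ℝ → ℝ) (hD : ContDiff ℝ 2 D) (hDpos : ∀ x, 0 < D x)
    (hDper : Function.Periodic D 1) (hr : Continuous r) (hrper : Function.Periodic r 1)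
    (q k : ℝ) (ψ : ℝ → ℝ) (hψ : IsEigenpair q 0 r D k ψ) :
    (∀ φ : ℝ → ℝ, ContDiff ℝ 2 φ → (∀ x, 0 < φ x) → Function.Periodic φ 1 →
      (∫ x in (0:ℝ)..1, φ x ^ 2) = 1 →
      -(∫ x in (0:ℝ)..1, D x ^ (1 - q) * (deriv (fun y => D y ^ (q / 2) * φ y) x) ^ 2) +
          (∫ x in (0:ℝ)..1, r x * φ x ^ 2) ≤ k) ∧
    (let φ₀ : ℝ → ℝ := (fun x =>
        D x ^ (q / 2) * ψ x / Real.sqrt (∫ y in (0:ℝ)..1, D y ^ q * ψ y ^ 2));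
     -(∫ x in (0:ℝ)..1, D x ^ (1 - q) * (deriv (fun y => D y ^ (q / 2) * φ₀ y) x) ^ 2) +
          (∫ x in (0:ℝ)..1, r x * φ₀ x ^ 2) = k) :=
  stmt_18_general D r hD hDpos hDper hr q k ψ hψ
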